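/- Define Θₙ(x) = e^{−x⁴} (dⁿ/dxⁿ)(e^{x⁴}). Then y = Θₙ satisfies the fourth-order linear ODE: y⁽⁴⁾ + 12x³ y‴ + [48x⁶ − 12(n−3)x²] y″ + [64x⁹ + (144 − 96n)x⁵ − 12(n² + 5n − 2)x] y′ + [−192n x⁸ − 48(n² + 8n)x⁴ − 4n(n² + 6n + 11)] y = 0. -/

import Mathlib

/-!
Both `F(z) = exp(z⁴)` and `E(z) = exp(-z⁴)` satisfy `f' = c z³ f` (with `c = ±4`), so Leibniz's
rule applied to `f⁽ᵐ⁺¹⁾ = (c z³ f)⁽ᵐ⁾` gives a four-term recurrence for their derivatives. By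
Leibniz again `Θₙ⁽ᵏ⁾ = ∑ C(k,i) E⁽ⁱ⁾ F⁽ⁿ⁺ᵏ⁻ⁱ⁾`; the recurrence for `E` turns each `E⁽ⁱ⁾` into an
explicit polynomial multiple of `E`, after which the differential equation is `E` times the
recurrence for `F` at `m = n + 3`.
-/

open scoped ContDiff

theorem Nat.cast_choose_mul_factorial {R : Type*} [Ring R] (m k : ℕ) :
    (m.choose k : R) * k.factorial = (descPochhammer R k).eval (m : R) := by
  rw [descPochhammer_eval_eq_descFactorial, Nat.descFactorial_eq_factorial_mul_choose,
    Nat.cast_mul, Nat.cast_comm]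

section IteratedDeriv

variable {𝕜 : Type*} [NontriviallyNormedField 𝕜]

theorem iteratedDeriv_iteratedDeriv {F : Type*} [NormedAddCommGroup F] [NormedSpace 𝕜 F]
    (f : 𝕜 → F) (m n : ℕ) :
    iteratedDeriv m (iteratedDeriv n f) = iteratedDeriv (n + m) f := by
  rw [add_comm]
  simp only [iteratedDeriv_eq_iterate, Function.iterate_add_apply]

theorem iteratedDeriv_mul_iteratedDeriv {𝔸 : Type*} [NormedRing 𝔸] [NormedAlgebra 𝕜 𝔸]
    {f g : 𝕜 → 𝔸} (hf : ContDiff 𝕜 ∞ f) (hg : ContDiff 𝕜 ∞ g) (n k : ℕ) (x : 𝕜) :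
    iteratedDeriv k (fun z => f z * iteratedDeriv n g z) x = ∑ i ∈ Finset.range (k + 1),
      k.choose i * iteratedDeriv i f x * iteratedDeriv (n + (k - i)) g x := by
  have hgn : ContDiff 𝕜 ∞ (iteratedDeriv n g) := by
    rw [iteratedDeriv_eq_iterate]
    exact hg.iterate_deriv n
  simp only [iteratedDeriv_fun_mul (hf.contDiffAt.of_le (by exact_mod_cast le_top))
    (hgn.contDiffAt.of_le (by exact_mod_cast le_top)), iteratedDeriv_iteratedDeriv]

/-- The indices `m - 1`, `m - 2`, `m - 3` are truncated, but their coefficients vanish whenever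
the truncation takes effect, so the recurrence holds for every `m`. -/
theorem iteratedDeriv_succ_of_deriv_eq_mul_pow_three {f : 𝕜 → 𝕜} {c : 𝕜}
    (hf : ContDiff 𝕜 ∞ f) (hf' : deriv f = fun z => c * z ^ 3 * f z) (m : ℕ) (x : 𝕜) :
    iteratedDeriv (m + 1) f x = c * x ^ 3 * iteratedDeriv m f x
      + 3 * c * m * x ^ 2 * iteratedDeriv (m - 1) f x
      + 3 * c * m * (m - 1) * x * iteratedDeriv (m - 2) f x
      + c * m * (m - 1) * (m - 2) * iteratedDeriv (m - 3) f x := by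
  rw [iteratedDeriv_succ', hf',
    iteratedDeriv_fun_mul (by fun_prop) (hf.contDiffAt.of_le (by exact_mod_cast le_top))]
  set term := fun i => (m.choose i : 𝕜) * iteratedDeriv i (fun z => c * z ^ 3) x *
    iteratedDeriv (m - i) f x
  have hchoose : ∑ i ∈ Finset.range (m + 1), term i = ∑ i ∈ Finset.range (m + 4), term i :=
    Finset.sum_subset (by simp) fun i _ hi => by
      simp [term, Nat.choose_eq_zero_of_lt (by simpa using hi : m < i)]
  have hcubic : ∑ i ∈ Finset.range 4, term i = ∑ i ∈ Finset.range (m + 4), term i :=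
    Finset.sum_subset (by simp) fun i _ hi => by
      simp [term, Nat.descFactorial_eq_zero_iff_lt.mpr (by simp at hi; omega : 3 < i)]
  have hchoose_two := Nat.cast_choose_mul_factorial (R := 𝕜) m 2
  have hchoose_three := Nat.cast_choose_mul_factorial (R := 𝕜) m 3
  simp only [Nat.factorial, Nat.succ_eq_add_one, Nat.reduceAdd, zero_add, mul_one, Nat.cast_ofNat,
    descPochhammer_succ_eval, descPochhammer_one, Polynomial.eval_X, Nat.cast_one,
    Nat.reduceMul] at hchoose_two hchoose_three
  rw [hchoose, ← hcubic]
  simp only [term, iteratedDeriv_const_mul_field, iteratedDeriv_pow, Finset.sum_range_succ,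
    Finset.range_one, Finset.sum_singleton, Nat.choose_zero_right, Nat.cast_one,
    Nat.descFactorial_zero, tsub_zero, one_mul, Nat.choose_one_right, Nat.descFactorial_succ,
    mul_one, Nat.cast_ofNat, Nat.add_one_sub_one, Nat.reduceMul, Nat.reduceSub, pow_one, tsub_self,
    pow_zero]
  linear_combination (3 * c * x * iteratedDeriv (m - 2) f x) * hchoose_two
    + (c * iteratedDeriv (m - 3) f x) * hchoose_three

end IteratedDeriv

open Complex

theorem deriv_cexp_mul_pow_four (a : ℂ) :
    deriv (fun z : ℂ => cexp (a * z ^ 4)) = fun z => 4 * a * z ^ 3 * cexp (a * z ^ 4) := by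
  ext z
  rw [deriv_cexp (by fun_prop)]
  simp
  ring

theorem fourth_order_ode_example
    (Θ : ℕ → ℂ → ℂ)
    (hΘ : ∀ n x, Θ n x = Complex.exp (-x ^ 4) *
      iteratedDeriv n (fun z => Complex.exp (z ^ 4)) x)
    (n : ℕ) (x : ℂ) :
    iteratedDeriv 4 (Θ n) x + 12 * x ^ 3 * iteratedDeriv 3 (Θ n) x
      + (48 * x ^ 6 - 12 * ((n : ℂ) - 3) * x ^ 2) * iteratedDeriv 2 (Θ n) x
      + (64 * x ^ 9 + (144 - 96 * (n : ℂ)) * x ^ 5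
          - 12 * ((n : ℂ) ^ 2 + 5 * (n : ℂ) - 2) * x) * deriv (Θ n) x
      + (-192 * (n : ℂ) * x ^ 8 - 48 * ((n : ℂ) ^ 2 + 8 * (n : ℂ)) * x ^ 4
          - 4 * (n : ℂ) * ((n : ℂ) ^ 2 + 6 * (n : ℂ) + 11)) * Θ n x = 0 := by
  have hE : ContDiff ℂ ∞ fun z : ℂ => cexp (-1 * z ^ 4) := by fun_prop
  have hF : ContDiff ℂ ∞ fun z : ℂ => cexp (1 * z ^ 4) := by fun_prop
  have hΘn : Θ n = fun z => cexp (-1 * z ^ 4) * iteratedDeriv n (fun z => cexp (1 * z ^ 4)) z := by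
    ext z
    simp [hΘ]
  have hErec := iteratedDeriv_succ_of_deriv_eq_mul_pow_three hE (deriv_cexp_mul_pow_four _)
  have hE1 := hErec 0 x
  have hE2 := hErec 1 x
  have hE3 := hErec 2 x
  have hE4 := hErec 3 x
  have hFrec :=
    iteratedDeriv_succ_of_deriv_eq_mul_pow_three hF (deriv_cexp_mul_pow_four _) (n + 3) x
  norm_num at hE1 hE2 hE3 hE4 hFrec
  simp only [Nat.reduceSubDiff, Nat.add_assoc, Nat.reduceAdd] at hFrec
  rw [← iteratedDeriv_one, hΘn]
  simp only [iteratedDeriv_mul_iteratedDeriv hE hF, Finset.sum_range_succ]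
  norm_num [Nat.choose_succ_succ]
  rw [hE4, hE3, hE2, hE1]
  linear_combination cexp (-x ^ 4) * hFrec
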